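/- Let 𝓕 be a family of transcendental entire functions (with D = ℂ) whose Julia like set J(𝓕) is backward invariant (f⁻¹(J(𝓕)) ⊆ J(𝓕) for every f ∈ 𝓕). If J(𝓕) is infinite, then J(𝓕) has no isolated points. -/

import Mathlib

open Filter Topology Set

/-- Locally uniform divergence to `∞` on the set `s`: on every compact subset of `s`,
the moduli eventually exceed every bound, uniformly. -/
def TendstoLocallyUniformlyOnInfty (F : ℕ → ℂ → ℂ) (s : Set ℂ) : Prop :=
  ∀ K ⊆ s, IsCompact K → ∀ M : ℝ, ∀ᶠ n in Filter.atTop, ∀ z ∈ K, M ≤ ‖F n z‖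

/-- The family `𝓕` of functions holomorphic on `D` is normal at `z₀ ∈ D`: there is a
neighborhood `N ⊆ D` of `z₀` on which every sequence from `𝓕` has a subsequence converging
locally uniformly either to a holomorphic function or to `∞`. -/
def NormalAt (D : Set ℂ) (𝓕 : Set (ℂ → ℂ)) (z₀ : ℂ) : Prop :=
  ∃ N, N ⊆ D ∧ N ∈ 𝓝 z₀ ∧ ∀ f : ℕ → ℂ → ℂ, (∀ n, f n ∈ 𝓕) →
    ∃ φ : ℕ → ℕ, StrictMono φ ∧
      ((∃ g : ℂ → ℂ, DifferentiableOn ℂ g N ∧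
          TendstoLocallyUniformlyOn (fun n => f (φ n)) g Filter.atTop N) ∨
        TendstoLocallyUniformlyOnInfty (fun n => f (φ n)) N)

/-- The Fatou like set of `𝓕` on `D`: points of `D` where `𝓕` is normal. -/
def FatouSet (D : Set ℂ) (𝓕 : Set (ℂ → ℂ)) : Set ℂ := {z | z ∈ D ∧ NormalAt D 𝓕 z}

/-- The Julia like set of `𝓕` on `D`. -/
def JuliaSet (D : Set ℂ) (𝓕 : Set (ℂ → ℂ)) : Set ℂ := D \ FatouSet D 𝓕

/-- The backward orbit of `z` with respect to `𝓕`. -/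
def BackwardOrbit (D : Set ℂ) (𝓕 : Set (ℂ → ℂ)) (z : ℂ) : Set ℂ :=
  {w | w ∈ D ∧ ∃ f ∈ 𝓕, f w = z}

/-- The exceptional set of `𝓕`: points with finite backward orbit. -/
def ExceptionalSet (D : Set ℂ) (𝓕 : Set (ℂ → ℂ)) : Set ℂ :=
  {z | (BackwardOrbit D 𝓕 z).Finite}

/-- The escaping like set `I(𝓕)`: points `z ∈ D` such that `f n z → ∞` for every
infinite (i.e. injective) sequence `f` in `𝓕`. -/
def EscapingSet (D : Set ℂ) (𝓕 : Set (ℂ → ℂ)) : Set ℂ :=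
  {z | z ∈ D ∧ ∀ f : ℕ → ℂ → ℂ, (∀ n, f n ∈ 𝓕) → Function.Injective f →
    Filter.Tendsto (fun n => ‖f n z‖) Filter.atTop Filter.atTop}

/-- The generalized escaping like set `U(𝓕)`: points `z ∈ D` such that `f n z → ∞` for some
sequence `f` in `𝓕`. -/
def GenEscapingSet (D : Set ℂ) (𝓕 : Set (ℂ → ℂ)) : Set ℂ :=
  {z | z ∈ D ∧ ∃ f : ℕ → ℂ → ℂ, (∀ n, f n ∈ 𝓕) ∧
    Filter.Tendsto (fun n => ‖f n z‖) Filter.atTop Filter.atTop}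

/-- A transcendental entire function: entire and not a polynomial. -/
def TranscendentalEntire (f : ℂ → ℂ) : Prop :=
  Differentiable ℂ f ∧ ¬ ∃ p : Polynomial ℂ, ∀ z, f z = p.eval z

/-- Boundary of `A` relative to `D`; for `D` open and `A ⊆ D` this coincides with the
boundary of `A` in the subspace topology of `D`. -/
def relBoundary (D A : Set ℂ) : Set ℂ := D ∩ frontier A

/-- Closure of `A` in `D`; for `D` open and `A ⊆ D` this coincides with the closure of `A`
in the subspace topology of `D`. -/
def relClosure (D A : Set ℂ) : Set ℂ := D ∩ closure A

/-!
If `z₀` were an isolated point of `J = J(𝓕)`, take a closed disc `B` around it with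
`B ∩ J = {z₀}`. Its boundary circle lies in the Fatou set, and by backward invariance every
`f ∈ 𝓕` takes values in `J` on `B` only at `z₀`; hence `f` omits on `B` one of two fixed points
`c₁ ≠ c₂` of `J`. From any sequence in `𝓕` extract a subsequence that, near each point of the
circle, is uniformly Cauchy or uniformly divergent; as the circle is connected, one alternative
holds all along it. The maximum principle carries uniform convergence from the circle into the
disc, and the minimum principle applied to `f - c`, for the omitted value `c`, carries uniform
divergence. So `𝓕` is normal at `z₀`, a contradiction.
-/

open Metric

section Compactness

variable {X ι : Type*} [TopologicalSpace X]

theorem IsCompact.eventually_forall_of_forall_exists_mem_nhds {K : Set X} (hK : IsCompact K)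
    {l : Filter ι} {P : ι → X → Prop} (h : ∀ x ∈ K, ∃ U ∈ 𝓝 x, ∀ᶠ i in l, ∀ y ∈ U, P i y) :
    ∀ᶠ i in l, ∀ y ∈ K, P i y := by
  refine hK.induction_on (p := fun s => ∀ᶠ i in l, ∀ y ∈ s, P i y) (by simp)
    (fun s t hst ht => ht.mono fun i hi y hy => hi y (hst hy))
    (fun s t hs ht => (hs.and ht).mono fun i hi y hy => hy.elim (hi.1 y) (hi.2 y))
    fun x hx => ?_
  obtain ⟨U, hU, hP⟩ := h x hx
  exact ⟨U, mem_nhdsWithin_of_mem_nhds hU, hP⟩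

theorem IsCompact.uniformCauchySeqOn_of_forall_exists_mem_nhds {β : Type*} [UniformSpace β]
    {K : Set X} (hK : IsCompact K) {F : ι → X → β} {l : Filter ι}
    (h : ∀ x ∈ K, ∃ U ∈ 𝓝 x, UniformCauchySeqOn F l U) : UniformCauchySeqOn F l K :=
  fun u hu => hK.eventually_forall_of_forall_exists_mem_nhds fun x hx =>
    (h x hx).imp fun _ hU => ⟨hU.1, hU.2 u hu⟩

theorem IsPreconnected.forall_or_forall_of_local {S : Set X} (hS : IsPreconnected S)
    {P Q : Set X → Prop} (hPQ : ∀ U V, P U → Q V → Disjoint U V)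
    (h : ∀ x ∈ S, (∃ U ∈ 𝓝 x, P U) ∨ ∃ U ∈ 𝓝 x, Q U) :
    (∀ x ∈ S, ∃ U ∈ 𝓝 x, P U) ∨ ∀ x ∈ S, ∃ U ∈ 𝓝 x, Q U := by
  have hopen (R : Set X → Prop) : IsOpen {x | ∃ U ∈ 𝓝 x, R U} :=
    isOpen_iff_mem_nhds.2 fun x ⟨U, hU, hR⟩ =>
      (eventually_mem_nhds_iff.2 hU).mono fun _ hy => ⟨U, hy, hR⟩
  have hdisj : Disjoint {x | ∃ U ∈ 𝓝 x, P U} {x | ∃ U ∈ 𝓝 x, Q U} :=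
    Set.disjoint_left.2 fun x ⟨U, hU, hPU⟩ ⟨V, hV, hQV⟩ =>
      Set.disjoint_left.1 (hPQ U V hPU hQV) (mem_of_mem_nhds hU) (mem_of_mem_nhds hV)
  exact hS.subset_or_subset (hopen P) (hopen Q) hdisj h
    |>.imp (fun hP x hx => hP hx) fun hQ x hx => hQ hx

end Compactness

theorem exists_strictMono_forall_mem_of_finite {α ι : Type*} {𝓕 : Set α}
    {P : ι → (ℕ → α) → Prop} (hP : ∀ i f φ, StrictMono φ → P i f → P i (f ∘ φ))
    {t : Set ι} (ht : t.Finite)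
    (hex : ∀ i ∈ t, ∀ f : ℕ → α, (∀ n, f n ∈ 𝓕) → ∃ φ, StrictMono φ ∧ P i (f ∘ φ))
    (f : ℕ → α) (hf : ∀ n, f n ∈ 𝓕) : ∃ φ, StrictMono φ ∧ ∀ i ∈ t, P i (f ∘ φ) := by
  induction t, ht using Set.Finite.induction_on generalizing f with
  | empty => exact ⟨id, strictMono_id, by simp⟩
  | @insert a s _ _ ih =>
    obtain ⟨φ, hφ, hs⟩ := ih (fun i hi => hex i (mem_insert_of_mem a hi)) f hf
    obtain ⟨ψ, hψ, ha⟩ := hex a (mem_insert a s) (f ∘ φ) fun n => hf _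
    refine ⟨φ ∘ ψ, hφ.comp hψ, ?_⟩
    rintro i (rfl | hi)
    · exact ha
    · exact hP i _ ψ hψ (hs i hi)

section MaximumModulus

variable {E : Type*} [NormedAddCommGroup E] [NormedSpace ℂ E] [Nontrivial E] {U : Set E}

theorem Complex.le_norm_of_forall_mem_frontier_le_norm {f : E → ℂ} (hU : Bornology.IsBounded U)
    (hd : DiffContOnCl ℂ f U) (hne : ∀ z ∈ closure U, f z ≠ 0) {m : ℝ}
    (hm : ∀ z ∈ frontier U, m ≤ ‖f z‖) {z : E} (hz : z ∈ closure U) : m ≤ ‖f z‖ := by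
  rcases le_or_gt m 0 with hm₀ | hm₀
  · exact hm₀.trans (norm_nonneg _)
  have hinv : ‖f⁻¹ z‖ ≤ m⁻¹ :=
    Complex.norm_le_of_forall_mem_frontier_norm_le hU (hd.inv hne)
      (fun w hw => by simpa only [Pi.inv_apply, norm_inv] using inv_anti₀ hm₀ (hm w hw)) hz
  rw [Pi.inv_apply, norm_inv] at hinv
  exact (inv_le_inv₀ (norm_pos_iff.2 (hne z hz)) hm₀).1 hinv

theorem Complex.sub_two_mul_norm_le_norm_of_forall_ne {f : E → ℂ} (hU : Bornology.IsBounded U)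
    (hd : DiffContOnCl ℂ f U) {c : ℂ} (hc : ∀ z ∈ closure U, f z ≠ c) {M : ℝ}
    (hM : ∀ z ∈ frontier U, M ≤ ‖f z‖) {z : E} (hz : z ∈ closure U) :
    M - 2 * ‖c‖ ≤ ‖f z‖ := by
  have hsub : M - ‖c‖ ≤ ‖f z - c‖ :=
    Complex.le_norm_of_forall_mem_frontier_le_norm hU (hd.sub_const c)
      (fun w hw => sub_ne_zero.2 (hc w hw))
      (fun w hw => by linarith [hM w hw, norm_sub_norm_le (f w) c]) hz
  linarith [norm_sub_le (f z) c]

theorem Complex.tendstoUniformlyOn_closure_of_frontier {ι : Type*} {l : Filter ι}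
    {G : ι → E → ℂ} (hU : Bornology.IsBounded U) (hG : ∀ i, DiffContOnCl ℂ (G i) U)
    (h : TendstoUniformlyOn G 0 l (frontier U)) : TendstoUniformlyOn G 0 l (closure U) := by
  rw [Metric.tendstoUniformlyOn_iff] at h ⊢
  intro ε hε
  filter_upwards [h (ε / 2) (half_pos hε)] with i hi z hz
  have hle : ‖G i z‖ ≤ ε / 2 :=
    Complex.norm_le_of_forall_mem_frontier_norm_le hU (hG i)
      (fun w hw => by simpa [dist_eq_norm] using (hi w hw).le) hz
  simpa [dist_eq_norm] using hle.trans_lt (half_lt_self hε)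

theorem Complex.uniformCauchySeqOn_closure_of_frontier {ι : Type*} {l : Filter ι}
    {F : ι → E → ℂ} (hU : Bornology.IsBounded U) (hF : ∀ i, DiffContOnCl ℂ (F i) U)
    (h : UniformCauchySeqOn F l (frontier U)) : UniformCauchySeqOn F l (closure U) := by
  rw [SeminormedAddGroup.uniformCauchySeqOn_iff_tendstoUniformlyOn_zero] at h ⊢
  exact Complex.tendstoUniformlyOn_closure_of_frontier hU
    (fun i => (hF i.1).neg.add (hF i.2)) h

end MaximumModulus

theorem UniformCauchySeqOn.exists_tendstoUniformlyOn {α β : Type*} [UniformSpace β]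
    [CompleteSpace β] {F : ℕ → α → β} {s : Set α} (hF : UniformCauchySeqOn F atTop s) :
    ∃ g, TendstoUniformlyOn F g atTop s := by
  choose g hg using fun x : s => cauchySeq_tendsto_of_complete (hF.cauchySeq x.2)
  classical
  refine ⟨fun x => if hx : x ∈ s then g ⟨x, hx⟩ else F 0 x, hF.tendstoUniformlyOn_of_tendsto ?_⟩
  intro x hx
  simpa [hx] using hg ⟨x, hx⟩

def LocallyUniformlyConvergentOn (F : ℕ → ℂ → ℂ) (s : Set ℂ) : Prop :=
  (∃ g : ℂ → ℂ, DifferentiableOn ℂ g s ∧ TendstoLocallyUniformlyOn F g atTop s) ∨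
    TendstoLocallyUniformlyOnInfty F s

def UniformlyDivergesOn (F : ℕ → ℂ → ℂ) (s : Set ℂ) : Prop :=
  ∀ M : ℝ, ∀ᶠ n in atTop, ∀ z ∈ s, M ≤ ‖F n z‖

theorem normalAt_iff {D : Set ℂ} {𝓕 : Set (ℂ → ℂ)} {z₀ : ℂ} :
    NormalAt D 𝓕 z₀ ↔ ∃ N, N ⊆ D ∧ N ∈ 𝓝 z₀ ∧ ∀ f : ℕ → ℂ → ℂ, (∀ n, f n ∈ 𝓕) →
      ∃ φ : ℕ → ℕ, StrictMono φ ∧ LocallyUniformlyConvergentOn (f ∘ φ) N :=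
  Iff.rfl

theorem LocallyUniformlyConvergentOn.comp_strictMono {F : ℕ → ℂ → ℂ} {s : Set ℂ}
    (h : LocallyUniformlyConvergentOn F s) {φ : ℕ → ℕ} (hφ : StrictMono φ) :
    LocallyUniformlyConvergentOn (F ∘ φ) s := by
  rcases h with ⟨g, hg, hFg⟩ | hF
  · refine Or.inl ⟨g, hg, fun u hu x hx => ?_⟩
    obtain ⟨t, ht, hev⟩ := hFg u hu x hx
    exact ⟨t, ht, hφ.tendsto_atTop.eventually hev⟩
  · exact Or.inr fun K hK hKc M => hφ.tendsto_atTop.eventually (hF K hK hKc M)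

theorem LocallyUniformlyConvergentOn.exists_mem_nhds {F : ℕ → ℂ → ℂ} {s : Set ℂ}
    (h : LocallyUniformlyConvergentOn F s) {x : ℂ} (hs : s ∈ 𝓝 x) :
    (∃ U ∈ 𝓝 x, UniformCauchySeqOn F atTop U) ∨ ∃ U ∈ 𝓝 x, UniformlyDivergesOn F U := by
  obtain ⟨K, ⟨hKx, hKc⟩, hKs⟩ := (compact_basis_nhds x).mem_iff.1 hs
  rcases h with ⟨g, -, hFg⟩ | hF
  · exact Or.inl ⟨K, hKx,
      ((tendstoLocallyUniformlyOn_iff_tendstoUniformlyOn_of_compact hKc).1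
        (hFg.mono hKs)).uniformCauchySeqOn⟩
  · exact Or.inr ⟨K, hKx, hF K hKs hKc⟩

theorem UniformCauchySeqOn.disjoint_of_uniformlyDivergesOn {F : ℕ → ℂ → ℂ} {U V : Set ℂ}
    (hU : UniformCauchySeqOn F atTop U) (hV : UniformlyDivergesOn F V) : Disjoint U V := by
  refine Set.disjoint_left.2 fun x hxU hxV => ?_
  obtain ⟨l, hl⟩ := cauchySeq_tendsto_of_complete (hU.cauchySeq hxU)
  obtain ⟨n, hbig, hsmall⟩ :=
    ((hV (‖l‖ + 1)).and (hl.norm.eventually_lt_const (lt_add_one ‖l‖))).exists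
  exact (hbig x hxV).not_gt hsmall

theorem IsCompact.uniformlyDivergesOn_of_forall_exists_mem_nhds {K : Set ℂ} (hK : IsCompact K)
    {F : ℕ → ℂ → ℂ} (h : ∀ x ∈ K, ∃ U ∈ 𝓝 x, UniformlyDivergesOn F U) :
    UniformlyDivergesOn F K :=
  fun M => hK.eventually_forall_of_forall_exists_mem_nhds fun x hx =>
    (h x hx).imp fun _ hU => ⟨hU.1, hU.2 M⟩

theorem exists_strictMono_locally_of_subset_fatouSet {D K : Set ℂ} {𝓕 : Set (ℂ → ℂ)}
    (hK : IsCompact K) (hKF : K ⊆ FatouSet D 𝓕) (f : ℕ → ℂ → ℂ) (hf : ∀ n, f n ∈ 𝓕) :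
    ∃ φ : ℕ → ℕ, StrictMono φ ∧ ∀ x ∈ K, (∃ U ∈ 𝓝 x, UniformCauchySeqOn (f ∘ φ) atTop U) ∨
      ∃ U ∈ 𝓝 x, UniformlyDivergesOn (f ∘ φ) U := by
  choose! N _ hNx hN using fun x (hx : x ∈ K) => normalAt_iff.1 (hKF hx).2
  obtain ⟨t, htK, ht, hcover⟩ := hK.elim_finite_subcover_image (fun x _ => isOpen_interior)
    fun x hx => mem_biUnion hx (mem_interior_iff_mem_nhds.2 (hNx x hx))
  obtain ⟨φ, hφ, hconv⟩ := exists_strictMono_forall_mem_of_finite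
    (P := fun i F => LocallyUniformlyConvergentOn F (N i))
    (fun _ _ _ hψ h => h.comp_strictMono hψ) ht (fun i hi => hN i (htK hi)) f hf
  refine ⟨φ, hφ, fun x hx => ?_⟩
  obtain ⟨i, hi, hxi⟩ := mem_iUnion₂.1 (hcover hx)
  exact (hconv i hi).exists_mem_nhds (mem_interior_iff_mem_nhds.1 hxi)

theorem exists_tendstoLocallyUniformlyOn_of_frontier {U : Set ℂ} (hU : Bornology.IsBounded U)
    (hUo : IsOpen U) {F : ℕ → ℂ → ℂ} (hF : ∀ n, DiffContOnCl ℂ (F n) U)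
    (h : UniformCauchySeqOn F atTop (frontier U)) :
    ∃ g, DifferentiableOn ℂ g U ∧ TendstoLocallyUniformlyOn F g atTop U := by
  obtain ⟨g, hg⟩ :=
    (Complex.uniformCauchySeqOn_closure_of_frontier hU hF h).exists_tendstoUniformlyOn
  have hFg : TendstoLocallyUniformlyOn F g atTop U :=
    (hg.mono subset_closure).tendstoLocallyUniformlyOn
  exact ⟨g, hFg.differentiableOn (Eventually.of_forall fun n => (hF n).differentiableOn) hUo, hFg⟩

theorem uniformlyDivergesOn_closure_of_frontier {U : Set ℂ} (hU : Bornology.IsBounded U)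
    {F : ℕ → ℂ → ℂ} (hF : ∀ n, DiffContOnCl ℂ (F n) U) {C : ℝ}
    (homit : ∀ n, ∃ c : ℂ, ‖c‖ ≤ C ∧ ∀ z ∈ closure U, F n z ≠ c)
    (h : UniformlyDivergesOn F (frontier U)) : UniformlyDivergesOn F (closure U) := by
  intro M
  filter_upwards [h (M + 2 * C)] with n hn z hz
  obtain ⟨c, hcC, hc⟩ := homit n
  linarith [Complex.sub_two_mul_norm_le_norm_of_forall_ne hU (hF n) hc hn hz]

theorem normalAt_of_sphere_subset_fatouSet {𝓕 : Set (ℂ → ℂ)}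
    (hent : ∀ f ∈ 𝓕, Differentiable ℂ f) {z₀ : ℂ} {r C : ℝ} (hr : 0 < r)
    (hsph : sphere z₀ r ⊆ FatouSet univ 𝓕)
    (homit : ∀ f ∈ 𝓕, ∃ c : ℂ, ‖c‖ ≤ C ∧ ∀ z ∈ closedBall z₀ r, f z ≠ c) :
    NormalAt univ 𝓕 z₀ := by
  refine normalAt_iff.2 ⟨ball z₀ r, subset_univ _, ball_mem_nhds z₀ hr, fun f hf => ?_⟩
  obtain ⟨φ, hφ, hloc⟩ :=
    exists_strictMono_locally_of_subset_fatouSet (isCompact_sphere z₀ r) hsph f hf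
  have hF (n : ℕ) : DiffContOnCl ℂ ((f ∘ φ) n) (ball z₀ r) := (hent _ (hf _)).diffContOnCl
  have hconn : IsPreconnected (sphere z₀ r) := isPreconnected_sphere (by simp) z₀ r
  refine ⟨φ, hφ, ?_⟩
  rcases hconn.forall_or_forall_of_local
    (fun _ _ hU hV => hU.disjoint_of_uniformlyDivergesOn hV) hloc with hcauchy | hdiv
  · have h := (isCompact_sphere z₀ r).uniformCauchySeqOn_of_forall_exists_mem_nhds hcauchy
    rw [← frontier_ball z₀ hr.ne'] at h
    exact Or.inl (exists_tendstoLocallyUniformlyOn_of_frontier isBounded_ball isOpen_ball hF h)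
  · have h := (isCompact_sphere z₀ r).uniformlyDivergesOn_of_forall_exists_mem_nhds hdiv
    rw [← frontier_ball z₀ hr.ne'] at h
    have hclosure := uniformlyDivergesOn_closure_of_frontier isBounded_ball hF
      (fun n => by
        simpa only [closure_ball z₀ hr.ne', Function.comp_apply] using homit _ (hf (φ n))) h
    exact Or.inr fun K hK _ M => (hclosure M).mono fun n hn z hz => hn z (subset_closure (hK hz))

/-- If the Julia like set of a family of transcendental entire functions
is backward invariant and infinite, then it has no isolated points. -/
theorem julia_no_isolated_points_of_infinite (𝓕 : Set (ℂ → ℂ))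
    (htra : ∀ f ∈ 𝓕, TranscendentalEntire f)
    (hback : ∀ f ∈ 𝓕, f ⁻¹' JuliaSet Set.univ 𝓕 ⊆ JuliaSet Set.univ 𝓕)
    (hinf : (JuliaSet Set.univ 𝓕).Infinite) :
    ∀ z₀ ∈ JuliaSet Set.univ 𝓕, ∀ N ∈ 𝓝 z₀,
      ((N ∩ JuliaSet Set.univ 𝓕) \ {z₀}).Nonempty := by
  intro z₀ hz₀ N hN
  by_contra hiso
  obtain ⟨r, hr, hrN⟩ := nhds_basis_closedBall.mem_iff.1 hN
  have hisolated : ∀ z ∈ closedBall z₀ r, z ∈ JuliaSet univ 𝓕 → z = z₀ :=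
    fun z hz hzJ => by_contra fun hne => hiso ⟨z, ⟨hrN hz, hzJ⟩, hne⟩
  have hsph : sphere z₀ r ⊆ FatouSet univ 𝓕 := fun x hx =>
    ⟨mem_univ x, by_contra fun hxF => ne_of_mem_sphere hx hr.ne'
      (hisolated x (sphere_subset_closedBall hx) ⟨mem_univ x, fun h => hxF h.2⟩)⟩
  obtain ⟨c₁, hc₁, c₂, hc₂, hne⟩ := hinf.nontrivial
  have homit : ∀ f ∈ 𝓕, ∃ c : ℂ, ‖c‖ ≤ max ‖c₁‖ ‖c₂‖ ∧ ∀ z ∈ closedBall z₀ r, f z ≠ c := by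
    intro f hf
    have hval (c : ℂ) (hc : c ∈ JuliaSet univ 𝓕) (z : ℂ) (hz : z ∈ closedBall z₀ r)
        (hfz : f z = c) : f z₀ = c :=
      hisolated z hz (hback f hf (show f z ∈ _ from hfz ▸ hc)) ▸ hfz
    by_cases h₁ : f z₀ = c₁
    · exact ⟨c₂, le_max_right _ _, fun z hz hfz => hne (h₁.symm.trans (hval c₂ hc₂ z hz hfz))⟩
    · exact ⟨c₁, le_max_left _ _, fun z hz hfz => h₁ (hval c₁ hc₁ z hz hfz)⟩
  exact hz₀.2 ⟨mem_univ z₀,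
    normalAt_of_sphere_subset_fatouSet (fun f hf => (htra f hf).1) hr hsph homit⟩
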